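/- arXiv:1511.00542 — 8 statements merged into one kernel-verified Lean document; each statement's English description precedes it below -/
import Mathlib

section
/- Let K, D be positive integers with D ≤ K - 1 and D ∣ K. Over F₂, consider K messages x₁,…,x_K (indices taken modulo K) and the K - D code symbols c_{i,j} = x_{i+(j-1)D} + x_{i+jD} for i = 1,…,D and j = 1,…,K/D - 1. Then for every k, the message x_k is determined by the code symbols together with the side information {x_{k+1}, x_{k+2}, …, x_{k+D}} (indices mod K). Formally: if two message vectors x, x' : Fin K → F₂ agree on positions k+1,…,k+D (mod K) and produce the same values of all code symbols, then x_k = x'_k. -/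
/-!
Write `f := x - x'`. Over `𝔽₂` the code symbol `x_a + x_{a+D}` agrees for `x` and `x'` exactly
when `f a = f (a + D)`, so `f` is constant along each chain `i, i + D, …, i + (K/D - 1) D`; since
`D ∣ K` the chain closes up modulo `K`, hence `f` is `D`-periodic on `ZMod K`. The antidote
`x_{k+D}` gives `f (k + D) = 0`, and periodicity yields `f k = 0`.
-/

theorem CharTwo.sub_eq_sub_of_add_eq_add {R : Type*} [CommRing R] [CharP R 2] {a b c d : R}
    (h : a + b = c + d) : a - c = b - d := by
  rw [sub_eq_sub_iff_add_eq_add]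
  linear_combination h + (d - b) * CharTwo.two_eq_zero (R := R)

section Chain

variable {α : Type*} {D N : ℕ}

theorem apply_add_mul_eq_of_chain (g : ℕ → α) {i : ℕ}
    (hg : ∀ j ∈ Finset.Icc 1 (N - 1), g (i + (j - 1) * D) = g (i + j * D)) :
    ∀ m ≤ N - 1, g (i + m * D) = g i
  | 0, _ => by simp
  | m + 1, hm => by
    rw [← hg (m + 1) (Finset.mem_Icc.2 ⟨by omega, hm⟩), Nat.add_sub_cancel]
    exact apply_add_mul_eq_of_chain g hg m (by omega)

theorem ZMod.apply_natCast_add_mul_eq_of_chain (hN : 0 < N) (f : ZMod (D * N) → α) {i : ℕ}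
    (hf : ∀ j ∈ Finset.Icc 1 (N - 1), f ((i + (j - 1) * D : ℕ)) = f ((i + j * D : ℕ)))
    (m : ℕ) : f ((i + m * D : ℕ)) = f i := by
  -- the chain closes up: `N` steps of size `D` wrap once around `ZMod (D * N)`
  have hwrap : ((i + m * D : ℕ) : ZMod (D * N)) = ((i + m % N * D : ℕ) : ZMod (D * N)) := by
    have hK : ((D * N : ℕ) : ZMod (D * N)) = 0 := ZMod.natCast_self _
    conv_lhs => rw [← Nat.mod_add_div m N]
    push_cast at hK ⊢
    linear_combination (m / N : ℕ) * hK
  rw [hwrap]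
  exact apply_add_mul_eq_of_chain (fun n => f n) hf _ (by have := Nat.mod_lt m hN; omega)

end Chain

theorem ZMod.apply_add_eq_of_chain {α : Type*} {K D : ℕ} [NeZero K] (hdvd : D ∣ K)
    (f : ZMod K → α)
    (hf : ∀ i ∈ Finset.Icc 1 D, ∀ j ∈ Finset.Icc 1 (K / D - 1),
      f ((i + (j - 1) * D : ℕ)) = f ((i + j * D : ℕ)))
    (a : ZMod K) : f (a + D) = f a := by
  have hK : 0 < K := NeZero.pos K
  have hD : 0 < D := Nat.pos_of_dvd_of_pos hdvd hK
  obtain ⟨N, rfl⟩ := hdvd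
  rw [Nat.mul_div_cancel_left N hD] at hf
  have hN : 0 < N := Nat.pos_of_mul_pos_left hK
  set n := a.val + D * N - 1
  have hi : n % D + 1 ∈ Finset.Icc 1 D := Finset.mem_Icc.2 ⟨by omega, Nat.mod_lt n hD⟩
  have ha : ((n % D + 1 + n / D * D : ℕ) : ZMod (D * N)) = a := by
    have : n % D + 1 + n / D * D = a.val + D * N := by
      have := Nat.mod_add_div n D; rw [Nat.mul_comm] at this; omega
    rw [this, Nat.cast_add, ZMod.natCast_self, add_zero, ZMod.natCast_zmod_val]
  have haD : ((n % D + 1 + (n / D + 1) * D : ℕ) : ZMod (D * N)) = a + D := by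
    rw [← ha]; push_cast; ring
  rw [← haD, ← ha, ZMod.apply_natCast_add_mul_eq_of_chain hN f (hf _ hi),
    ZMod.apply_natCast_add_mul_eq_of_chain hN f (hf _ hi)]

theorem stmt_0_general (K D : ℕ) [NeZero K] (hdvd : D ∣ K)
    (k : ZMod K) (x x' : ZMod K → ZMod 2)
    (hside : ∀ j ∈ Finset.Icc 1 D, x (k + (j : ℕ)) = x' (k + (j : ℕ)))
    (hcode : ∀ i ∈ Finset.Icc 1 D, ∀ j ∈ Finset.Icc 1 (K / D - 1),
      x ((i + (j - 1) * D : ℕ) : ZMod K) + x ((i + j * D : ℕ) : ZMod K)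
        = x' ((i + (j - 1) * D : ℕ) : ZMod K) + x' ((i + j * D : ℕ) : ZMod K)) :
    x k = x' k := by
  have hperiodic := ZMod.apply_add_eq_of_chain hdvd (x - x')
    (fun i hi j hj => CharTwo.sub_eq_sub_of_add_eq_add (hcode i hi j hj)) k
  have hantidote := hside D (Finset.mem_Icc.2 ⟨Nat.pos_of_dvd_of_pos hdvd (NeZero.pos K), le_rfl⟩)
  simpa [hantidote, sub_eq_zero, eq_comm] using hperiodic

/-- decodability of the code `x_{i+(j-1)D} + x_{i+jD}` when `D ∣ K`,
for receiver `R_k` with one-sided adjacent antidotes `{x_{k+1},…,x_{k+D}}` (indices mod K). -/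
theorem stmt_0 (K D : ℕ) [NeZero K] (hD : 0 < D) (hDK : D ≤ K - 1) (hdvd : D ∣ K)
    (k : ZMod K) (x x' : ZMod K → ZMod 2)
    (hside : ∀ j ∈ Finset.Icc 1 D, x (k + (j : ℕ)) = x' (k + (j : ℕ)))
    (hcode : ∀ i ∈ Finset.Icc 1 D, ∀ j ∈ Finset.Icc 1 (K / D - 1),
      x ((i + (j - 1) * D : ℕ) : ZMod K) + x ((i + j * D : ℕ) : ZMod K)
        = x' ((i + (j - 1) * D : ℕ) : ZMod K) + x' ((i + j * D : ℕ) : ZMod K)) :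
    x k = x' k :=
  stmt_0_general K D hdvd k x x' hside hcode
end

section
/- Let K, D be positive integers with (K - D) ∣ K and K - D ≥ 1. Set m = K - D and n = K/(K-D). Over F₂, with K messages indexed cyclically by Fin K, define the m code symbols c_i = x_i + x_{i+m} + x_{i+2m} + ⋯ + x_{i+(n-1)m} for i = 1,…,m. Then for every k, if two message vectors agree on positions {k+1, …, k+D} (mod K) and give the same values of all m code symbols, they agree at position k. In particular this index code has length K - D. -/
/-!
Write `m = K - D` and `n = K / m`. The code symbol `c_i` is the sum of `x` over the coset
`i + ⟨m⟩` of `ZMod K`, which has exactly `n` elements since `n * m = K`. Let `i` be the index whose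
coset contains `k`. Periodicity lets us re-enumerate that coset starting from `k`, so
`c_i = x_k + ∑_{s = 1}^{n-1} x_{k + s m}`, and each `s m ≤ (n - 1) m = D` is an antidote of `R_k`.
-/

open Finset

theorem Function.Periodic.sum_range_add {M : Type*} [AddCancelCommMonoid M] {g : ℕ → M} {n : ℕ}
    (hg : Function.Periodic g n) (t₀ : ℕ) :
    ∑ t ∈ range n, g (t + t₀) = ∑ t ∈ range n, g t := by
  induction t₀ with
  | zero => rfl
  | succ t₀ ih =>
    have h := (sum_range_succ' (fun t ↦ g (t + t₀)) n).symm.trans (sum_range_succ _ n)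
    rw [show n + t₀ = t₀ + n by ring, hg, zero_add] at h
    simp only [add_right_comm _ 1 t₀, add_assoc] at h ⊢
    rw [← ih]
    exact add_right_cancel h

theorem ZMod.exists_natCast_add_mul_eq {K m : ℕ} [NeZero K] (hm : 0 < m) (k : ZMod K) :
    ∃ i ∈ Icc 1 m, ∃ t₀ : ℕ, ((i + t₀ * m : ℕ) : ZMod K) = k := by
  -- code indices run over `1, …, m`, so write `k - 1` (rather than `k`) in base `m`
  set r := (k - 1).val
  refine ⟨r % m + 1, mem_Icc.2 ⟨le_add_self, Nat.mod_lt r hm⟩, r / m, ?_⟩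
  rw [add_right_comm, Nat.mod_add_div', Nat.cast_add, ZMod.natCast_zmod_val, Nat.cast_one,
    sub_add_cancel]

section CyclicCode

variable {M : Type*} [AddCancelCommMonoid M] {K m n : ℕ}

theorem sum_range_natCast_add_mul_shift (hK : n * m = K) (f : ZMod K → M) (i t₀ : ℕ) :
    ∑ t ∈ range n, f ((i + t * m : ℕ) : ZMod K)
      = ∑ t ∈ range n, f (((i + t₀ * m : ℕ) : ZMod K) + (t * m : ℕ)) := by
  have hper : Function.Periodic (fun t : ℕ ↦ f ((i + t * m : ℕ) : ZMod K)) n := fun t ↦ by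
    simp only [add_mul, ← add_assoc, Nat.cast_add (i + t * m), hK, ZMod.natCast_self, add_zero]
  rw [← hper.sum_range_add t₀]
  refine sum_congr rfl fun t _ ↦ ?_
  push_cast
  ring_nf

theorem eq_of_eq_antidotes_of_eq_cosetSums [NeZero K] {D : ℕ} (hK : n * m = K) (hD : D + m = K)
    (k : ZMod K) (x x' : ZMod K → M)
    (hside : ∀ j ∈ Icc 1 D, x (k + (j : ℕ)) = x' (k + (j : ℕ)))
    (hcode : ∀ i ∈ Icc 1 m,
      ∑ t ∈ range n, x ((i + t * m : ℕ) : ZMod K) = ∑ t ∈ range n, x' ((i + t * m : ℕ) : ZMod K)) :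
    x k = x' k := by
  have hnm : 0 < n * m := hK ▸ NeZero.pos K
  obtain ⟨n, rfl⟩ := Nat.exists_eq_add_one.2 (Nat.pos_of_mul_pos_right hnm)
  obtain ⟨i, hi, t₀, rfl⟩ := ZMod.exists_natCast_add_mul_eq (Nat.pos_of_mul_pos_left hnm) k
  have h := hcode i hi
  rw [sum_range_natCast_add_mul_shift hK x i t₀, sum_range_natCast_add_mul_shift hK x' i t₀,
    sum_range_succ', sum_range_succ'] at h
  have hrest : ∀ t ∈ range n, x ((i + t₀ * m : ℕ) + ((t + 1) * m : ℕ))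
      = x' ((i + t₀ * m : ℕ) + ((t + 1) * m : ℕ)) := fun t ht ↦ by
    refine hside _ (mem_Icc.2 ⟨Nat.mul_pos t.succ_pos (Nat.pos_of_mul_pos_left hnm), ?_⟩)
    calc (t + 1) * m ≤ n * m := Nat.mul_le_mul_right m (mem_range.1 ht)
      _ = D := by rw [← Nat.add_right_cancel_iff, hD, ← hK, add_one_mul]
  rw [sum_congr rfl hrest] at h
  simpa using add_left_cancel h

end CyclicCode

theorem stmt_1_general (K D : ℕ) [NeZero K] (hm : 0 < K - D) (hdvd : (K - D) ∣ K)
    (k : ZMod K) (x x' : ZMod K → ZMod 2)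
    (hside : ∀ j ∈ Finset.Icc 1 D, x (k + (j : ℕ)) = x' (k + (j : ℕ)))
    (hcode : ∀ i ∈ Finset.Icc 1 (K - D),
      ∑ t ∈ Finset.range (K / (K - D)), x ((i + t * (K - D) : ℕ) : ZMod K)
        = ∑ t ∈ Finset.range (K / (K - D)), x' ((i + t * (K - D) : ℕ) : ZMod K)) :
    x k = x' k ∧ (Finset.Icc 1 (K - D)).card = K - D :=
  ⟨eq_of_eq_antidotes_of_eq_cosetSums (Nat.div_mul_cancel hdvd) (by omega) k x x' hside hcode,
    by simp⟩

/-- decodability of the code `c_i = x_i + x_{i+m} + ⋯ + x_{i+(n-1)m}`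
(`m = K - D`, `n = K/(K-D)`), for receiver `R_k` with antidotes `{x_{k+1},…,x_{k+D}}`;
in particular the code has length `K - D`. -/
theorem stmt_1 (K D : ℕ) [NeZero K] (hD : 0 < D) (hm : 0 < K - D) (hdvd : (K - D) ∣ K)
    (k : ZMod K) (x x' : ZMod K → ZMod 2)
    (hside : ∀ j ∈ Finset.Icc 1 D, x (k + (j : ℕ)) = x' (k + (j : ℕ)))
    (hcode : ∀ i ∈ Finset.Icc 1 (K - D),
      ∑ t ∈ Finset.range (K / (K - D)), x ((i + t * (K - D) : ℕ) : ZMod K)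
        = ∑ t ∈ Finset.range (K / (K - D)), x' ((i + t * (K - D) : ℕ) : ZMod K)) :
    x k = x' k ∧ (Finset.Icc 1 (K - D)).card = K - D :=
  stmt_1_general K D hm hdvd k x x' hside hcode
end

section
/- Let K, D, U be nonnegative integers with U ≤ D, K ≥ 1, D ≤ K - 1. Suppose C = (t₁,…,t_l) is an F₂-linear index code of length l for the cyclic one-sided problem with K messages y₁,…,y_K in which receiver R_k has antidotes {y_{k+1},…,y_{k+D-U}} and, moreover, each receiver decodes via a sum of code symbols of the form S_k = y_k + y_{k+a_{k,1}} + ⋯ + y_{k+a_{k,d_k}} with 1 ≤ a_{k,1} < ⋯ < a_{k,d_k} ≤ D - U. Consider the two-sided problem with K vector messages x̄_k = (x_{k,1},…,x_{k,U+1}) ∈ F₂^{U+1}, where receiver R_k has antidotes {x̄_{k-U},…,x̄_{k-1}} ∪ {x̄_{k+1},…,x̄_{k+D}} (indices mod K). Define the code C^{(U+1)} by substituting y_k ↦ Σ_{i=1}^{U+1} x_{k+1-i, i} in each code symbol of C. Then every receiver R_k can decode all U+1 of its demanded symbols x_{k,1},…,x_{k,U+1} from the code symbols of C^{(U+1)}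 together with its two-sided antidotes. -/
/-!
By linearity it suffices to show that a difference `e = x - x'` which vanishes on the antidotes
of `R_k` and is annihilated by every code symbol of `C^{(U+1)}` has `e_{k,i} = 0`. This goes by
downward induction on `i`: the decoding sum of the scalar receiver `k + i - 1`, evaluated at the
substituted symbols, vanishes. In its leading term every `e_{k+i-i', i'}` with `i' ≠ i` sits at a
nonzero offset in `[-U, D]` from `k`, hence is an antidote; in a term shifted by `a ∈ [1, D - U]`
the only non-antidote is `e_{k, i+a}`, already known to vanish since `i + a > i`.
-/

open Finset

section
variable {A R : Type*} [CommRing A] [AddCommMonoid R]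

/-- The symbol substituted for `y_m` in `C^{(U+1)}`: `∑_{i=1}^{U+1} x_{m+1-i, i}`. -/
def diagSum (U : ℕ) (x : A → ℕ → R) (m : A) : R :=
  ∑ i ∈ Icc 1 (U + 1), x (m + 1 - (i : ℕ)) i

theorem diagSum_sub {R : Type*} [AddCommGroup R] (U : ℕ) (x x' : A → ℕ → R) (m : A) :
    diagSum U (fun m i => x m i - x' m i) m = diagSum U x m - diagSum U x' m :=
  sum_sub_distrib ..

theorem forall_intCast_offset_of_antidote {U D : ℕ} {k : A} {P : A → Prop}
    (h : ∀ m : A,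
      ((∃ u ∈ Icc 1 U, m = k - (u : ℕ)) ∨ (∃ v ∈ Icc 1 D, m = k + (v : ℕ))) → P m)
    (z : ℤ) (hU : -(U : ℤ) ≤ z) (hD : z ≤ D) (hz : z ≠ 0) : P (k + z) := by
  obtain ⟨n, rfl | rfl⟩ := z.eq_nat_or_neg
  · exact h _ (Or.inr ⟨n, mem_Icc.2 ⟨by omega, by omega⟩, by push_cast; rfl⟩)
  · exact h _ (Or.inl ⟨n, mem_Icc.2 ⟨by omega, by omega⟩, by push_cast; ring⟩)

variable {U D : ℕ} {k : A} {e : A → ℕ → R}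

theorem diagSum_add_sub_one
    (hanti : ∀ z : ℤ, -(U : ℤ) ≤ z → z ≤ D → z ≠ 0 → ∀ i, e (k + z) i = 0)
    {n : ℕ} (hn : 1 ≤ n) (hnD : n ≤ D + 1) :
    diagSum U e (k + n - 1) = if n ∈ Icc 1 (U + 1) then e k n else 0 := by
  rw [diagSum, ← sum_ite_eq']
  refine sum_congr rfl fun i hi => ?_
  have hoff : k + n - 1 + 1 - (i : ℕ) = k + ((n - i : ℤ) : A) := by push_cast; ring
  rw [hoff]
  split_ifs with h
  · subst h; simp
  · rw [mem_Icc] at hi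
    exact hanti _ (by omega) (by omega) (by omega) i

theorem eq_zero_of_diagSum_decodable (hUD : U ≤ D)
    (hanti : ∀ z : ℤ, -(U : ℤ) ≤ z → z ≤ D → z ≠ 0 → ∀ i, e (k + z) i = 0)
    (hdec : ∀ k' : A, ∃ (d : ℕ) (a : Fin d → ℕ), (∀ j, 1 ≤ a j ∧ a j ≤ D - U) ∧
      diagSum U e k' + ∑ j, diagSum U e (k' + (a j : ℕ)) = 0)
    (i : ℕ) (hi : i ∈ Icc 1 (U + 1)) : e k i = 0 := by
  have hi_bounds := mem_Icc.1 hi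
  obtain ⟨d, a, ha, hsum⟩ := hdec (k + i - 1)
  have hlater : ∀ j, diagSum U e (k + i - 1 + (a j : ℕ)) = 0 := by
    intro j
    obtain ⟨ha1, haD⟩ := ha j
    have hshift : k + i - 1 + (a j : ℕ) = k + ((i + a j : ℕ) : A) - 1 := by push_cast; ring
    rw [hshift, diagSum_add_sub_one hanti (by omega) (by omega)]
    split_ifs with hmem
    · have hdecreasing : i + a j ≤ U + 1 := (mem_Icc.1 hmem).2
      exact eq_zero_of_diagSum_decodable hUD hanti hdec _ hmem
    · rfl
  rwa [sum_eq_zero fun j _ => hlater j, add_zero,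
    diagSum_add_sub_one hanti hi_bounds.1 (by omega), if_pos hi] at hsum
termination_by U + 1 - i
decreasing_by all_goals omega

end

theorem stmt_4_general (K D U : ℕ) [NeZero K] (hU : U ≤ D)
    (l : ℕ) (t : Fin l → ZMod K → ZMod 2)
    (hdec : ∀ k : ZMod K, ∃ (T : Finset (Fin l)) (d : ℕ) (a : Fin d → ℕ),
      StrictMono a ∧ (∀ i, 1 ≤ a i ∧ a i ≤ D - U) ∧
      ∀ y : ZMod K → ZMod 2,
        ∑ j ∈ T, ∑ m : ZMod K, t j m * y m = y k + ∑ i, y (k + (a i : ℕ)))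
    (k : ZMod K) (x x' : ZMod K → ℕ → ZMod 2)
    (hside : ∀ m : ZMod K,
      ((∃ u ∈ Finset.Icc 1 U, m = k - (u : ℕ)) ∨
        (∃ v ∈ Finset.Icc 1 D, m = k + (v : ℕ))) →
      ∀ i, x m i = x' m i)
    (hcode : ∀ j : Fin l,
      ∑ m : ZMod K, t j m * ∑ i ∈ Finset.Icc 1 (U + 1), x (m + 1 - (i : ℕ)) i
        = ∑ m : ZMod K, t j m * ∑ i ∈ Finset.Icc 1 (U + 1), x' (m + 1 - (i : ℕ)) i) :
    ∀ i ∈ Finset.Icc 1 (U + 1), x k i = x' k i := by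
  intro i hi
  set e : ZMod K → ℕ → ZMod 2 := fun m i => x m i - x' m i
  have hanti : ∀ z : ℤ, -(U : ℤ) ≤ z → z ≤ D → z ≠ 0 → ∀ i, e (k + z) i = 0 :=
    forall_intCast_offset_of_antidote (P := fun m => ∀ i, e m i = 0)
      fun m hm i => sub_eq_zero.2 (hside m hm i)
  have hcode_diff : ∀ j, ∑ m, t j m * diagSum U e m = 0 := fun j => by
    simp only [e, diagSum_sub, mul_sub, sum_sub_distrib]
    exact sub_eq_zero.2 (hcode j)
  refine sub_eq_zero.1 (eq_zero_of_diagSum_decodable hU hanti (fun k' => ?_) i hi)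
  obtain ⟨T, d, a, -, ha, hS⟩ := hdec k'
  exact ⟨d, a, ha, by rw [← hS, sum_eq_zero fun j _ => hcode_diff j]⟩

/-- Theorem 1 of the paper: if the scalar linear code
`C = (t₁,…,t_l)` for the one-sided problem (antidotes `{y_{k+1},…,y_{k+D-U}}`)
decodes each `y_k` via a sum of code symbols of the form
`S_k = y_k + y_{k+a_{k,1}} + ⋯ + y_{k+a_{k,d_k}}` with `1 ≤ a_{k,1} < ⋯ < a_{k,d_k} ≤ D-U`,
then the substituted code `C^{(U+1)}` (substituting `y_k ↦ Σ_{i=1}^{U+1} x_{k+1-i,i}`)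
lets every receiver of the two-sided problem with antidotes
`{x̄_{k-U},…,x̄_{k-1}} ∪ {x̄_{k+1},…,x̄_{k+D}}` decode all `U+1` of its demanded symbols. -/
theorem stmt_4 (K D U : ℕ) [NeZero K] (hU : U ≤ D) (hK : 1 ≤ K) (hDK : D ≤ K - 1)
    (l : ℕ) (t : Fin l → ZMod K → ZMod 2)
    (hdec : ∀ k : ZMod K, ∃ (T : Finset (Fin l)) (d : ℕ) (a : Fin d → ℕ),
      StrictMono a ∧ (∀ i, 1 ≤ a i ∧ a i ≤ D - U) ∧
      ∀ y : ZMod K → ZMod 2,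
        ∑ j ∈ T, ∑ m : ZMod K, t j m * y m = y k + ∑ i, y (k + (a i : ℕ)))
    (k : ZMod K) (x x' : ZMod K → ℕ → ZMod 2)
    (hside : ∀ m : ZMod K,
      ((∃ u ∈ Finset.Icc 1 U, m = k - (u : ℕ)) ∨
        (∃ v ∈ Finset.Icc 1 D, m = k + (v : ℕ))) →
      ∀ i, x m i = x' m i)
    (hcode : ∀ j : Fin l,
      ∑ m : ZMod K, t j m * ∑ i ∈ Finset.Icc 1 (U + 1), x (m + 1 - (i : ℕ)) i
        = ∑ m : ZMod K, t j m * ∑ i ∈ Finset.Icc 1 (U + 1), x' (m + 1 - (i : ℕ)) i) :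
    ∀ i ∈ Finset.Icc 1 (U + 1), x k i = x' k i :=
  stmt_4_general K D U hU l t hdec k x x' hside hcode
end

section
/- Decoding step for the highest-index symbol: with notation as in the substitution construction (y_k = Σ_{i=1}^{U+1} x_{k+1-i,i}, indices mod K), suppose receiver R_k has antidotes {x̄_{k-U},…,x̄_{k-1}} ∪ {x̄_{k+1},…,x̄_{k+D}} and the sum S_{k+U}^{(U+1)} = Σ_{i=1}^{U+1} x_{k+U+1-i,i} + Σ_{j=1}^{d} Σ_{i=1}^{U+1} x_{k+U+a_j+1-i, i} is available, where 1 ≤ a_1 < ⋯ < a_d ≤ D - U. Then exactly one term of S_{k+U}^{(U+1)} is a symbol demanded by R_k, namely x_{k,U+1}, and every other term lies in the antidote set of R_k; hence R_k recovers x_{k,U+1}. -/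
/-!
Every summand of `S_{k+U}^{(U+1)}` is `x_{m,i}` with `m = k + n` for a natural number
`0 ≤ n ≤ D`: in the first group `n = U + 1 - i ≤ U`, in the group of `a_j` it is
`n = U + a_j + 1 - i`, between `a_j ≥ 1` and `U + a_j ≤ D`. Since `D < K`, the index `k + n`
equals `k` only for `n = 0`, i.e. for the term `x_{k,U+1}`; all other summands are among the
`D` successors of `k`, hence antidotes. Subtracting them from `S_{k+U}^{(U+1)}` leaves
`x_{k,U+1}`.
-/

/-- `m` is an antidote index for receiver `R_k`:
`m ∈ {k-U,…,k-1} ∪ {k+1,…,k+D}` (indices mod `K`). -/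
def isAntidote (K U D : ℕ) (k m : ZMod K) : Prop :=
  (∃ u ∈ Finset.Icc 1 U, m = k - (u : ℕ)) ∨ (∃ v ∈ Finset.Icc 1 D, m = k + (v : ℕ))

open Finset

theorem ZMod.natCast_eq_zero_iff_of_lt {K n : ℕ} (h : n < K) : (n : ZMod K) = 0 ↔ n = 0 := by
  rw [ZMod.natCast_eq_zero_iff]
  exact ⟨fun hd => Nat.eq_zero_of_dvd_of_lt hd h, fun hn => hn ▸ dvd_zero K⟩

theorem ZMod.add_natCast_eq_self_iff_of_lt {K n : ℕ} (k : ZMod K) (h : n < K) :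
    k + n = k ↔ n = 0 := by
  rw [add_eq_left, ZMod.natCast_eq_zero_iff_of_lt h]

theorem Finset.apply_eq_of_sum_eq_of_eq_off {ι M : Type*} [DecidableEq ι]
    [AddCancelCommMonoid M] {s : Finset ι} {i₀ : ι} {f g : ι → M} (hi₀ : i₀ ∈ s)
    (hsum : ∑ i ∈ s, f i = ∑ i ∈ s, g i) (hfg : ∀ i ∈ s, i ≠ i₀ → f i = g i) :
    f i₀ = g i₀ := by
  rw [← add_sum_erase s f hi₀, ← add_sum_erase s g hi₀,
    sum_congr rfl fun i hi => hfg i (mem_of_mem_erase hi) (ne_of_mem_erase hi)] at hsum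
  exact add_right_cancel hsum

section Summands

theorem add_natCast_add_one_sub_natCast {R : Type*} [CommRing R] (k : R) {n i : ℕ}
    (hi : i ≤ n + 1) : k + (n : ℕ) + 1 - (i : ℕ) = k + ((n + 1 - i : ℕ) : R) := by
  push_cast [Nat.cast_sub hi]
  ring

theorem add_natCast_add_natCast_add_one_sub_natCast {R : Type*} [CommRing R] (k : R)
    {n c i : ℕ} (hi : i ≤ n + c + 1) :
    k + (n : ℕ) + (c : ℕ) + 1 - (i : ℕ) = k + ((n + c + 1 - i : ℕ) : R) := by
  rw [← add_natCast_add_one_sub_natCast k hi]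
  push_cast
  ring

variable {K U D : ℕ} (k : ZMod K)

theorem summand_eq_self_iff (hUK : U < K) {i : ℕ} (hi : i ∈ Icc 1 (U + 1)) :
    k + (U : ℕ) + 1 - (i : ℕ) = k ↔ i = U + 1 := by
  rw [mem_Icc] at hi
  rw [add_natCast_add_one_sub_natCast k hi.2, ZMod.add_natCast_eq_self_iff_of_lt k (by omega)]
  omega

theorem isAntidote_summand (hUD : U ≤ D) {i : ℕ} (hi : i ∈ Icc 1 (U + 1)) (hne : i ≠ U + 1) :
    isAntidote K U D k (k + (U : ℕ) + 1 - (i : ℕ)) := by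
  rw [mem_Icc] at hi
  exact Or.inr ⟨U + 1 - i, mem_Icc.2 ⟨by omega, by omega⟩,
    add_natCast_add_one_sub_natCast k hi.2⟩

theorem shifted_summand_ne_self {c : ℕ} (hc : 1 ≤ c) (hK : U + c < K) {i : ℕ}
    (hi : i ∈ Icc 1 (U + 1)) : k + (U : ℕ) + (c : ℕ) + 1 - (i : ℕ) ≠ k := by
  rw [mem_Icc] at hi
  rw [add_natCast_add_natCast_add_one_sub_natCast k (by omega),
    Ne, ZMod.add_natCast_eq_self_iff_of_lt k (by omega)]
  omega

theorem isAntidote_shifted_summand {c : ℕ} (hc : 1 ≤ c) (hcD : U + c ≤ D) {i : ℕ}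
    (hi : i ∈ Icc 1 (U + 1)) :
    isAntidote K U D k (k + (U : ℕ) + (c : ℕ) + 1 - (i : ℕ)) := by
  rw [mem_Icc] at hi
  exact Or.inr ⟨U + c + 1 - i, mem_Icc.2 ⟨by omega, by omega⟩,
    add_natCast_add_natCast_add_one_sub_natCast k (by omega)⟩

end Summands

theorem stmt_5_general (K D U : ℕ) (hDU : 1 ≤ D - U)
    (hKbound : U + D ≤ K - 1)
    (d : ℕ) (a : Fin d → ℕ)
    (hrange : ∀ j, 1 ≤ a j ∧ a j ≤ D - U) (k : ZMod K) :
    -- the only demanded summand is x_{k,U+1}, coming from the first group with i = U+1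
    (∀ i ∈ Finset.Icc 1 (U + 1), ((k + (U : ℕ) + 1 - (i : ℕ) : ZMod K) = k ↔ i = U + 1))
    ∧ (∀ j : Fin d, ∀ i ∈ Finset.Icc 1 (U + 1),
        (k + (U : ℕ) + (a j : ℕ) + 1 - (i : ℕ) : ZMod K) ≠ k)
    -- every other summand lies in the antidote set of R_k
    ∧ (∀ i ∈ Finset.Icc 1 (U + 1), i ≠ U + 1 →
        isAntidote K U D k (k + (U : ℕ) + 1 - (i : ℕ)))
    ∧ (∀ j : Fin d, ∀ i ∈ Finset.Icc 1 (U + 1),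
        isAntidote K U D k (k + (U : ℕ) + (a j : ℕ) + 1 - (i : ℕ)))
    -- hence R_k recovers x_{k,U+1}
    ∧ (∀ x x' : ZMod K → ℕ → ZMod 2,
        (∀ m : ZMod K, isAntidote K U D k m → ∀ i, x m i = x' m i) →
        (∑ i ∈ Finset.Icc 1 (U + 1), x (k + (U : ℕ) + 1 - (i : ℕ)) i
            + ∑ j : Fin d, ∑ i ∈ Finset.Icc 1 (U + 1),
                x (k + (U : ℕ) + (a j : ℕ) + 1 - (i : ℕ)) i
          = ∑ i ∈ Finset.Icc 1 (U + 1), x' (k + (U : ℕ) + 1 - (i : ℕ)) i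
            + ∑ j : Fin d, ∑ i ∈ Finset.Icc 1 (U + 1),
                x' (k + (U : ℕ) + (a j : ℕ) + 1 - (i : ℕ)) i) →
        x k (U + 1) = x' k (U + 1)) := by
  have demanded := fun i (hi : i ∈ Icc 1 (U + 1)) => summand_eq_self_iff k (by omega) hi
  have antidote := fun i (hi : i ∈ Icc 1 (U + 1)) => isAntidote_summand (D := D) k (by omega) hi
  have shifted_antidote := fun j i (hi : i ∈ Icc 1 (U + 1)) =>
    isAntidote_shifted_summand (U := U) (D := D) (c := a j) k (hrange j).1
      (by have := hrange j; omega) hi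
  refine ⟨demanded, fun j i hi => shifted_summand_ne_self (c := a j) k (hrange j).1
    (by have := hrange j; omega) hi, antidote, shifted_antidote, ?_⟩
  intro x x' hx hsum
  have hshifted : ∑ j : Fin d, ∑ i ∈ Icc 1 (U + 1), x (k + (U : ℕ) + (a j : ℕ) + 1 - (i : ℕ)) i
      = ∑ j : Fin d, ∑ i ∈ Icc 1 (U + 1), x' (k + (U : ℕ) + (a j : ℕ) + 1 - (i : ℕ)) i :=
    sum_congr rfl fun j _ => sum_congr rfl fun i hi => hx _ (shifted_antidote j i hi) i
  rw [hshifted, add_left_inj] at hsum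
  have hlast : U + 1 ∈ Icc 1 (U + 1) := mem_Icc.2 ⟨by omega, le_rfl⟩
  have key := apply_eq_of_sum_eq_of_eq_off hlast hsum
    fun i hi hne => hx _ (antidote i hi hne) i
  rwa [(demanded _ hlast).2 rfl] at key

/-- in the sum `S_{k+U}^{(U+1)} = Σ_i x_{k+U+1-i,i} + Σ_j Σ_i x_{k+U+a_j+1-i,i}`,
exactly one summand is demanded by `R_k`, namely `x_{k,U+1}`; every other summand is an
antidote symbol of `R_k`; hence `R_k` recovers `x_{k,U+1}`. -/
theorem stmt_5 (K D U : ℕ) [NeZero K] (hU : U ≤ D) (hDU : 1 ≤ D - U)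
    (hKbound : U + D ≤ K - 1) (hK : 1 ≤ K)
    (d : ℕ) (a : Fin d → ℕ) (ha : StrictMono a)
    (hrange : ∀ j, 1 ≤ a j ∧ a j ≤ D - U) (k : ZMod K) :
    -- the only demanded summand is x_{k,U+1}, coming from the first group with i = U+1
    (∀ i ∈ Finset.Icc 1 (U + 1), ((k + (U : ℕ) + 1 - (i : ℕ) : ZMod K) = k ↔ i = U + 1))
    ∧ (∀ j : Fin d, ∀ i ∈ Finset.Icc 1 (U + 1),
        (k + (U : ℕ) + (a j : ℕ) + 1 - (i : ℕ) : ZMod K) ≠ k)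
    -- every other summand lies in the antidote set of R_k
    ∧ (∀ i ∈ Finset.Icc 1 (U + 1), i ≠ U + 1 →
        isAntidote K U D k (k + (U : ℕ) + 1 - (i : ℕ)))
    ∧ (∀ j : Fin d, ∀ i ∈ Finset.Icc 1 (U + 1),
        isAntidote K U D k (k + (U : ℕ) + (a j : ℕ) + 1 - (i : ℕ)))
    -- hence R_k recovers x_{k,U+1}
    ∧ (∀ x x' : ZMod K → ℕ → ZMod 2,
        (∀ m : ZMod K, isAntidote K U D k m → ∀ i, x m i = x' m i) →
        (∑ i ∈ Finset.Icc 1 (U + 1), x (k + (U : ℕ) + 1 - (i : ℕ)) i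
            + ∑ j : Fin d, ∑ i ∈ Finset.Icc 1 (U + 1),
                x (k + (U : ℕ) + (a j : ℕ) + 1 - (i : ℕ)) i
          = ∑ i ∈ Finset.Icc 1 (U + 1), x' (k + (U : ℕ) + 1 - (i : ℕ)) i
            + ∑ j : Fin d, ∑ i ∈ Finset.Icc 1 (U + 1),
                x' (k + (U : ℕ) + (a j : ℕ) + 1 - (i : ℕ)) i) →
        x k (U + 1) = x' k (U + 1)) :=
  stmt_5_general K D U hDU hKbound d a hrange k
end

section
/- Vector-linear optimality from scalar optimality: let K, D, U satisfy 0 ≤ U, U + D ≤ K - 2, and Δ = D - U ≥ 1. Suppose there exists a decodable scalar linear index code of length K - Δ over F₂ for the one-sided cyclic problem (K messages, antidotes {y_{k+1},…,y_{k+Δ}}). Then the two-sided problem with antidotes {x̄_{k-U},…,x̄_{k-1}} ∪ {x̄_{k+1},…,x̄_{k+D}} admits a vector-linear index code of rate (U+1)/(K - D + U) symbols per message, i.e., a code broadcasting K - D + U binary symbols from which every receiver recovers its U+1 demanded binary symbols; this rate equals the capacity (U+1)/(K + U - D). -/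
/-!
Lift a scalar code `t` for the one-sided problem with window `Δ = D - U` to the vector code
`s c (m, i) = t c (m - i)`. Its broadcast symbols are those of `t` applied to the diagonal sums
`Y m = ∑ i, x̄_{m+i}(i)`. Receiver `k` recovers `x̄_k(r)` by induction on `r`: it runs the scalar
decoder at position `k - r`, whose side information `Y_{k-r+1}, …, Y_{k-r+Δ}` involves only
components `x̄_{k-r+j+i}(i)` with offset `j + i - r ∈ [-U, D]`, known from the antidotes, or equal
to `x̄_k(i)` with `i < r`, already decoded. From `Y_{k-r}` it then cancels every term except
`x̄_k(r)`, all of which sit at offsets in `[-U, U] \ {0}`.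
-/

open Finset

namespace CyclicIndexCoding

variable {F : Type*} [CommRing F] {K : ℕ} {C : Type*}

def OneSidedDecodable [NeZero K] (t : C → ZMod K → F) (Δ : ℕ) : Prop :=
  ∀ (k : ZMod K) (y y' : ZMod K → F),
    (∀ j ∈ Icc 1 Δ, y (k + (j : ℕ)) = y' (k + (j : ℕ))) →
    (∀ c, ∑ m, t c m * y m = ∑ m, t c m * y' m) →
    y k = y' k

def IsTwoSidedAntidote (U D : ℕ) (k m : ZMod K) : Prop :=
  (∃ u ∈ Icc 1 U, m = k - (u : ℕ)) ∨ (∃ v ∈ Icc 1 D, m = k + (v : ℕ))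

def TwoSidedDecodable [NeZero K] (U D : ℕ) (s : C → ZMod K × Fin (U + 1) → F) : Prop :=
  ∀ (k : ZMod K) (x x' : ZMod K × Fin (U + 1) → F),
    (∀ m i, IsTwoSidedAntidote U D k m → x (m, i) = x' (m, i)) →
    (∀ c, ∑ p, s c p * x p = ∑ p, s c p * x' p) →
    ∀ i, x (k, i) = x' (k, i)

def liftCode (U : ℕ) (t : C → ZMod K → F) : C → ZMod K × Fin (U + 1) → F :=
  fun c p => t c (p.1 - ((p.2 : ℕ) : ZMod K))

def diagonalSum {U : ℕ} (x : ZMod K × Fin (U + 1) → F) (m : ZMod K) : F :=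
  ∑ i : Fin (U + 1), x (m + ((i : ℕ) : ZMod K), i)

theorem sum_liftCode_mul [NeZero K] {U : ℕ} (t : C → ZMod K → F) (c : C)
    (x : ZMod K × Fin (U + 1) → F) :
    ∑ p, liftCode U t c p * x p = ∑ m, t c m * diagonalSum x m := by
  simp only [liftCode, diagonalSum, mul_sum, Fintype.sum_prod_type]
  rw [sum_comm]
  conv_rhs => rw [sum_comm]
  refine sum_congr rfl fun i _ => ?_
  exact Fintype.sum_equiv (Equiv.subRight ((i : ℕ) : ZMod K)) _ _ fun m => by simp

theorem isTwoSidedAntidote_sub_add {U D : ℕ} (k : ZMod K) {a b : ℕ} (hab : a ≠ b)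
    (hb : b ≤ a + U) (ha : a ≤ b + D) :
    IsTwoSidedAntidote U D k (k - (b : ℕ) + (a : ℕ)) := by
  rcases hab.lt_or_gt with hlt | hgt
  · refine Or.inl ⟨b - a, mem_Icc.mpr ⟨by omega, by omega⟩, ?_⟩
    push_cast [Nat.cast_sub hlt.le]
    ring
  · refine Or.inr ⟨a - b, mem_Icc.mpr ⟨by omega, by omega⟩, ?_⟩
    push_cast [Nat.cast_sub hgt.le]
    ring

theorem eq_of_diagonalSum_eq {U : ℕ} {x x' : ZMod K × Fin (U + 1) → F} {m : ZMod K}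
    (r : Fin (U + 1)) (hsum : diagonalSum x m = diagonalSum x' m)
    (hother : ∀ i ≠ r, x (m + ((i : ℕ) : ZMod K), i) = x' (m + ((i : ℕ) : ZMod K), i)) :
    x (m + ((r : ℕ) : ZMod K), r) = x' (m + ((r : ℕ) : ZMod K), r) := by
  unfold diagonalSum at hsum
  rw [← add_sum_erase _ _ (mem_univ r), ← add_sum_erase _ _ (mem_univ r),
    sum_congr rfl fun i hi => hother i (ne_of_mem_erase hi)] at hsum
  exact add_right_cancel hsum

variable {U D : ℕ} {k : ZMod K} {x x' : ZMod K × Fin (U + 1) → F}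

theorem diagonalSum_window_eq {Δ : ℕ} (hΔ : Δ + U ≤ D)
    (hant : ∀ m i, IsTwoSidedAntidote U D k m → x (m, i) = x' (m, i))
    {r : ℕ} (hdecoded : ∀ i : Fin (U + 1), (i : ℕ) < r → x (k, i) = x' (k, i))
    (hr : r ≤ U) :
    ∀ j ∈ Icc 1 Δ,
      diagonalSum x (k - (r : ℕ) + (j : ℕ)) = diagonalSum x' (k - (r : ℕ) + (j : ℕ)) := by
  intro j hj
  rw [mem_Icc] at hj
  refine sum_congr rfl fun i _ => ?_
  have hpos : k - (r : ℕ) + (j : ℕ) + ((i : ℕ) : ZMod K)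
      = k - (r : ℕ) + ((j + i : ℕ) : ZMod K) := by
    push_cast
    ring
  rw [hpos]
  by_cases hjr : j + i = r
  · rw [hjr, sub_add_cancel]
    exact hdecoded i (by omega)
  · exact hant _ _ (isTwoSidedAntidote_sub_add k hjr (by omega) (by omega))

theorem OneSidedDecodable.liftCode [NeZero K] {t : C → ZMod K → F} {Δ : ℕ}
    (ht : OneSidedDecodable t Δ) (hΔ : Δ + U ≤ D) : TwoSidedDecodable U D (liftCode U t) := by
  intro k x x' hant hcode
  have hcode' : ∀ c, ∑ m, t c m * diagonalSum x m = ∑ m, t c m * diagonalSum x' m := fun c => by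
    rw [← sum_liftCode_mul, ← sum_liftCode_mul]
    exact hcode c
  suffices h : ∀ r : ℕ, ∀ i : Fin (U + 1), (i : ℕ) = r → x (k, i) = x' (k, i) from
    fun i => h i i rfl
  intro r
  induction r using Nat.strong_induction_on with
  | _ r ih =>
    rintro r' rfl
    have hdiag : diagonalSum x (k - (r' : ℕ)) = diagonalSum x' (k - (r' : ℕ)) :=
      ht _ _ _ (diagonalSum_window_eq hΔ hant (fun i hi => ih i hi i rfl) (by omega)) hcode'
    have hcomp := eq_of_diagonalSum_eq r' hdiag fun i hi =>
      hant _ _ (isTwoSidedAntidote_sub_add k (Fin.val_ne_of_ne hi) (by omega) (by omega))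
    rwa [sub_add_cancel] at hcomp

end CyclicIndexCoding

open CyclicIndexCoding in
theorem stmt_8_general (K D U : ℕ) [NeZero K] (hU : U ≤ D) (hKD : U + D ≤ K - 2)
    (hscalar : ∃ t : Fin (K - D + U) → ZMod K → ZMod 2,
      ∀ (k : ZMod K) (y y' : ZMod K → ZMod 2),
        (∀ j ∈ Finset.Icc 1 (D - U), y (k + (j : ℕ)) = y' (k + (j : ℕ))) →
        (∀ c, ∑ m : ZMod K, t c m * y m = ∑ m : ZMod K, t c m * y' m) →
        y k = y' k) :
    (∃ s : Fin (K - D + U) → (ZMod K × Fin (U + 1)) → ZMod 2,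
      ∀ (k : ZMod K) (x x' : ZMod K × Fin (U + 1) → ZMod 2),
        (∀ (m : ZMod K) (i : Fin (U + 1)),
          ((∃ u ∈ Finset.Icc 1 U, m = k - (u : ℕ)) ∨
            (∃ v ∈ Finset.Icc 1 D, m = k + (v : ℕ))) →
          x (m, i) = x' (m, i)) →
        (∀ c, ∑ p : ZMod K × Fin (U + 1), s c p * x p
            = ∑ p : ZMod K × Fin (U + 1), s c p * x' p) →
        ∀ i : Fin (U + 1), x (k, i) = x' (k, i))
    ∧ ((U : ℚ) + 1) / ((K - D + U : ℕ) : ℚ) = ((U : ℚ) + 1) / ((K : ℚ) + U - D) := by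
  obtain ⟨t, ht⟩ := hscalar
  refine ⟨⟨liftCode U t, OneSidedDecodable.liftCode ht (by omega)⟩, ?_⟩
  rw [Nat.cast_add, Nat.cast_sub (by omega : D ≤ K)]
  ring

/-- vector-linear optimality from scalar optimality: if the one-sided
cyclic problem with antidotes `{y_{k+1},…,y_{k+Δ}}`, `Δ = D - U ≥ 1`, admits a decodable
scalar linear code of length `K - Δ = K - D + U`, then the two-sided problem with
antidotes `{x̄_{k-U},…,x̄_{k-1}} ∪ {x̄_{k+1},…,x̄_{k+D}}` admits a vector-linear code
broadcasting `K - D + U` binary symbols from which every receiver recovers all `U+1`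
of its demanded symbols; its rate `(U+1)/(K-D+U)` equals the capacity `(U+1)/(K+U-D)`. -/
theorem stmt_8 (K D U : ℕ) [NeZero K] (hU : U ≤ D) (hKD : U + D ≤ K - 2)
    (hΔ : 1 ≤ D - U)
    (hscalar : ∃ t : Fin (K - D + U) → ZMod K → ZMod 2,
      ∀ (k : ZMod K) (y y' : ZMod K → ZMod 2),
        (∀ j ∈ Finset.Icc 1 (D - U), y (k + (j : ℕ)) = y' (k + (j : ℕ))) →
        (∀ c, ∑ m : ZMod K, t c m * y m = ∑ m : ZMod K, t c m * y' m) →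
        y k = y' k) :
    (∃ s : Fin (K - D + U) → (ZMod K × Fin (U + 1)) → ZMod 2,
      ∀ (k : ZMod K) (x x' : ZMod K × Fin (U + 1) → ZMod 2),
        (∀ (m : ZMod K) (i : Fin (U + 1)),
          ((∃ u ∈ Finset.Icc 1 U, m = k - (u : ℕ)) ∨
            (∃ v ∈ Finset.Icc 1 D, m = k + (v : ℕ))) →
          x (m, i) = x' (m, i)) →
        (∀ c, ∑ p : ZMod K × Fin (U + 1), s c p * x p
            = ∑ p : ZMod K × Fin (U + 1), s c p * x' p) →
        ∀ i : Fin (U + 1), x (k, i) = x' (k, i))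
    ∧ ((U : ℚ) + 1) / ((K - D + U : ℕ) : ℚ) = ((U : ℚ) + 1) / ((K : ℚ) + U - D) :=
  stmt_8_general K D U hU hKD hscalar
end

section
/- Let K = 20, U = 1, D = 5 (so Δ = 4). Over F₂, with 40 message symbols x_{k,i} (k ∈ Z/20, i ∈ {1,2}) and y_k := x_{k,1} + x_{k-1,2}, the 16 code symbols y_k + y_{k+4} for k = 1,…,16 allow every receiver R_k — which knows all symbols x_{m,i} for m ∈ {k-1} ∪ {k+1,…,k+5} (mod 20) — to decode both x_{k,1} and x_{k,2}. That is, any two assignments of the 40 symbols that agree on R_k's antidote positions and produce identical values of all 16 code symbols agree on x_{k,1} and x_{k,2}. -/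
/-!
Write `d = x - x'` and `e a = d (a, 1) + d (a - 1, 2)`. In characteristic 2 the code equations
say `e c = e (c + 4)` for `c = 1, …, 16`; on each residue class mod 4 these are four of the five
edges of a 5-cycle, so `e` is 4-periodic. The side information kills `e (k + 4)` and `e (k + 5)`,
hence `e k = e (k + 1) = 0`, and as `d (k - 1, 2) = d (k + 1, 1) = 0` this leaves
`d (k, 1) = d (k, 2) = 0`.
-/

open Function

namespace ZMod

variable {α : Type*} {n m : ℕ} {f : ZMod n → α}

theorem eq_natCast_add_mul_of_eq_add_on_Icc (h : ∀ c ∈ Finset.Icc 1 (n - m), f c = f (c + m))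
    {c : ℕ} (hc : 1 ≤ c) : ∀ j : ℕ, c + j * m ≤ n → f c = f ((c + j * m : ℕ) : ZMod n)
  | 0, _ => by simp
  | j + 1, hj => by
    rw [add_one_mul] at hj
    have hmem : c + j * m ∈ Finset.Icc 1 (n - m) := Finset.mem_Icc.2 ⟨by omega, by omega⟩
    rw [eq_natCast_add_mul_of_eq_add_on_Icc h hc j (by omega), h _ hmem]
    push_cast; ring_nf

theorem exists_natCast_eq_of_mem_Icc [NeZero n] (a : ZMod n) :
    ∃ w ∈ Finset.Icc 1 n, (w : ZMod n) = a := by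
  by_cases ha : a = 0
  · exact ⟨n, by simp [Nat.one_le_iff_ne_zero, NeZero.ne n], by simp [ha]⟩
  · exact ⟨a.val, by simp [Nat.one_le_iff_ne_zero, ha, (val_lt a).le], by simp⟩

theorem periodic_of_eq_add_on_Icc [NeZero n] (hm : m ∣ n)
    (h : ∀ c ∈ Finset.Icc 1 (n - m), f c = f (c + m)) : Periodic f (m : ZMod n) := by
  intro a
  obtain ⟨w, hw, rfl⟩ := exists_natCast_eq_of_mem_Icc a
  rw [Finset.mem_Icc] at hw
  by_cases hwm : w ≤ n - m
  · exact (h w (Finset.mem_Icc.2 ⟨hw.1, hwm⟩)).symm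
  have hmn : m ≤ n := Nat.le_of_dvd (Nat.pos_of_neZero n) hm
  obtain ⟨q, hq⟩ := hm
  -- past `n - m`, walk back from `w` in steps of `m` to `c = w - (n - m) ∈ [1, m]`,
  -- which is `w + m` in `ZMod n`
  have hc : 1 ≤ w - (n - m) := by omega
  have hcw : w - (n - m) + (q - 1) * m = w := by
    rw [Nat.sub_one_mul, mul_comm, ← hq]; omega
  have hcm : ((w - (n - m) : ℕ) : ZMod n) = w + m := by
    rw [Nat.cast_sub (by omega), Nat.cast_sub hmn, natCast_self]; ring
  rw [← hcm, eq_natCast_add_mul_of_eq_add_on_Icc h hc (q - 1) (by omega), hcw]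

end ZMod

section Decoding

variable {R : Type*} {n : ℕ}

/-- The paper's `y_a = x_{a,1} + x_{a-1,2}`; its symbol indices `1, 2` are `0, 1 : Fin 2` here. -/
def shiftedSum [Add R] (x : ZMod n → Fin 2 → R) (a : ZMod n) : R := x a 0 + x (a - 1) 1

theorem shiftedSum_sub [AddCommGroup R] (x x' : ZMod n → Fin 2 → R) :
    shiftedSum (x - x') = shiftedSum x - shiftedSum x' := by
  ext a
  simp only [shiftedSum, Pi.sub_apply]
  abel

theorem periodic_shiftedSum_sub [Ring R] [CharP R 2] [NeZero n] {m : ℕ} (hm : m ∣ n)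
    {x x' : ZMod n → Fin 2 → R}
    (hcode : ∀ c ∈ Finset.Icc 1 (n - m),
      shiftedSum x c + shiftedSum x (c + m) = shiftedSum x' c + shiftedSum x' (c + m)) :
    Periodic (shiftedSum (x - x')) m := by
  refine ZMod.periodic_of_eq_add_on_Icc hm fun c hc => CharTwo.add_eq_zero.mp ?_
  rw [shiftedSum_sub, Pi.sub_apply, Pi.sub_apply, ← sub_eq_zero.2 (hcode c hc)]
  abel

theorem eq_zero_of_periodic_shiftedSum [AddCommGroup R] {d : ZMod n → Fin 2 → R} {k a : ZMod n}
    (hper : Periodic (shiftedSum d) a) (hprev : d (k - 1) 1 = 0) (hnext : d (k + 1) 0 = 0)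
    (hbefore : d (k + a - 1) 1 = 0) (hat : d (k + a) = 0) (hafter : d (k + a + 1) 0 = 0) :
    d k = 0 := by
  have hk : shiftedSum d k = 0 := by
    rw [← hper, shiftedSum, hat, hbefore, Pi.zero_apply, add_zero]
  have hk₁ : shiftedSum d (k + 1) = 0 := by
    rw [← hper, shiftedSum, add_right_comm, add_sub_cancel_right, hat, hafter, Pi.zero_apply,
      add_zero]
  funext i
  fin_cases i
  · simpa [shiftedSum, hprev] using hk
  · simpa [shiftedSum, hnext] using hk₁

end Decoding

/-- concrete instance `K = 20`, `U = 1`, `D = 5`. With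
`y_k = x_{k,1} + x_{k-1,2}`, the 16 code symbols `y_k + y_{k+4}` (`k = 1,…,16`)
let every receiver `R_k` (knowing all symbols of messages `k-1` and `k+1,…,k+5`)
decode both `x_{k,1}` and `x_{k,2}`. -/
theorem stmt_9 (k : ZMod 20) (x x' : ZMod 20 → Fin 2 → ZMod 2)
    (hside₁ : ∀ i, x (k - 1) i = x' (k - 1) i)
    (hside₂ : ∀ j ∈ Finset.Icc 1 5, ∀ i, x (k + (j : ℕ)) i = x' (k + (j : ℕ)) i)
    (hcode : ∀ c ∈ Finset.Icc (1 : ℕ) 16,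
      (x (c : ZMod 20) 0 + x ((c : ZMod 20) - 1) 1)
          + (x ((c : ZMod 20) + 4) 0 + x ((c : ZMod 20) + 3) 1)
        = (x' (c : ZMod 20) 0 + x' ((c : ZMod 20) - 1) 1)
          + (x' ((c : ZMod 20) + 4) 0 + x' ((c : ZMod 20) + 3) 1)) :
    x k 0 = x' k 0 ∧ x k 1 = x' k 1 := by
  have hper : Periodic (shiftedSum (x - x')) ((4 : ℕ) : ZMod 20) :=
    periodic_shiftedSum_sub (by norm_num) fun c hc => by
      simpa only [shiftedSum, Nat.cast_ofNat, show (c : ZMod 20) + 4 - 1 = c + 3 by ring]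
        using hcode c hc
  have hside (j : ℕ) (hj : j ∈ Finset.Icc 1 5) : (x - x') (k + j) = 0 :=
    funext fun i => sub_eq_zero.2 (hside₂ j hj i)
  have hk : (x - x') k = 0 := by
    refine eq_zero_of_periodic_shiftedSum hper (sub_eq_zero.2 (hside₁ 1)) ?_ ?_ ?_ ?_
    · simpa using congrFun (hside 1 (by decide)) 0
    · rw [show k + ((4 : ℕ) : ZMod 20) - 1 = k + (3 : ℕ) by push_cast; ring]
      exact congrFun (hside 3 (by decide)) 1
    · exact hside 4 (by decide)
    · rw [show k + ((4 : ℕ) : ZMod 20) + 1 = k + (5 : ℕ) by push_cast; ring]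
      exact congrFun (hside 5 (by decide)) 0
  exact ⟨sub_eq_zero.1 (congrFun hk 0), sub_eq_zero.1 (congrFun hk 1)⟩
end

section
/- Let K, D, λ be positive integers with λ ∣ (K - D), (K - D) ∣ (K - λ), m := K - D, q := (K-λ)/m. Over F₂ with K cyclically indexed messages, define code symbols c_i = x_i + x_{i+m} + ⋯ + x_{i+(q-1)m} + x_{qm + 1 + ((i-1) mod λ)} for i = 1,…,m. Then every receiver R_k with antidotes {x_{k+1},…,x_{k+D}} (indices mod K) can decode x_k from c_1,…,c_m, so this one-sided problem admits a scalar linear index code of length K - D. -/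
/-!
By linearity it suffices to show that a word `y` which vanishes on the side information of `R_k`
and has all code symbols zero satisfies `y_k = 0`. Writing `K = q m + L`, the receiver misses
exactly the `m` cyclically consecutive positions ending at `k`, so we look for code symbols in
which `k` is the only missing position. Represent `k` by `a ∈ [1, K]`. If `m ≤ a ≤ q m`, take
`c_i` with `i ≡ a (mod m)`: its other block positions are at least `m` away from `a` and its tail
position lies in `(q m, K]`, hence within `K - m` after `a`. If `q m < a`, then `a` is the tail
position of `c_{a - q m}`, whose block positions all lie below `a - m + 1`. If `a < m`, the block
positions of `c_a` other than `a` are known, and so is its tail position when `a + L > m`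
(because `L ∣ m`); otherwise `c_{a + L}` has the same tail position and only known block
positions, so it recovers the tail first.
-/

open Finset

theorem Nat.mul_add_le_mul_of_lt {s t : ℕ} (m : ℕ) (h : s < t) : s * m + m ≤ t * m := by
  simpa only [Nat.succ_mul] using Nat.mul_le_mul_right m h

theorem Nat.le_div_mul_add_of_dvd {L m n : ℕ} (hLm : L ∣ m) (h : m ≤ n + L) :
    m ≤ n / L * L + L := by
  obtain ⟨e, rfl⟩ := hLm
  rcases Nat.eq_zero_or_pos L with rfl | hL
  · simp
  have he : e - 1 ≤ n / L := (Nat.le_div_iff_mul_le hL).2 (by rw [Nat.sub_one_mul]; lia)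
  calc L * e ≤ (e - 1) * L + L := by rw [Nat.sub_one_mul]; lia
    _ ≤ n / L * L + L := by gcongr

theorem ZMod.exists_mem_Icc_natCast_eq {K : ℕ} [NeZero K] (k : ZMod K) :
    ∃ a ∈ Icc 1 K, (a : ZMod K) = k := by
  rcases eq_or_ne k 0 with rfl | hk
  · exact ⟨K, mem_Icc.2 ⟨NeZero.one_le, le_rfl⟩, ZMod.natCast_self K⟩
  · refine ⟨k.val, mem_Icc.2 ⟨?_, (ZMod.val_lt k).le⟩, ZMod.natCast_zmod_val k⟩
    exact Nat.one_le_iff_ne_zero.2 ((ZMod.val_ne_zero k).2 hk)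

namespace CyclicIndexCode

variable {G : Type*} [AddCommGroup G] {K : ℕ}

def codeSymbol (m q L : ℕ) (y : ZMod K → G) (i : ℕ) : G :=
  ∑ t ∈ range q, y ((i + t * m : ℕ) : ZMod K) + y ((q * m + 1 + (i - 1) % L : ℕ) : ZMod K)

theorem codeSymbol_sub (m q L : ℕ) (x x' : ZMod K → G) (i : ℕ) :
    codeSymbol m q L (x - x') i = codeSymbol m q L x i - codeSymbol m q L x' i := by
  simp only [codeSymbol, Pi.sub_apply, sum_sub_distrib]
  abel

variable {m q L : ℕ} {y : ZMod K → G}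

theorem codeSymbol_eq_of_forall_ne {i t₀ : ℕ} (ht₀ : t₀ < q)
    (hblock : ∀ t < q, t ≠ t₀ → y ((i + t * m : ℕ) : ZMod K) = 0)
    (htail : y ((q * m + 1 + (i - 1) % L : ℕ) : ZMod K) = 0) :
    codeSymbol m q L y i = y ((i + t₀ * m : ℕ) : ZMod K) := by
  rw [codeSymbol, htail, add_zero]
  exact sum_eq_single_of_mem t₀ (mem_range.2 ht₀) fun t ht hne ↦ hblock t (mem_range.1 ht) hne

theorem codeSymbol_eq_tail {i : ℕ} (hblock : ∀ t < q, y ((i + t * m : ℕ) : ZMod K) = 0) :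
    codeSymbol m q L y i = y ((q * m + 1 + (i - 1) % L : ℕ) : ZMod K) := by
  rw [codeSymbol, sum_eq_zero fun t ht ↦ hblock t (mem_range.1 ht), zero_add]

theorem apply_eq_zero_of_add_le {a : ℕ} (haK : a ≤ K)
    (hknown : ∀ n : ℕ, a < n → n ≤ a + (K - m) → y n = 0) {p : ℕ} (hp : 1 ≤ p)
    (hpa : p + m ≤ a) : y p = 0 := by
  simpa using hknown (p + K) (by lia) (by lia)

theorem apply_eq_zero_of_le_mul (hK : K = q * m + L) (hm : 0 < m) (hLm : L ∣ m) {a : ℕ}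
    (hknown : ∀ n : ℕ, a < n → n ≤ a + (K - m) → y n = 0)
    (hcode : ∀ i ∈ Icc 1 m, codeSymbol m q L y i = 0) (hma : m ≤ a) (haq : a ≤ q * m) :
    y a = 0 := by
  set t₀ := (a - 1) / m
  set i := (a - 1) % m + 1
  have hai : a = i + t₀ * m := by have := Nat.div_add_mod' (a - 1) m; lia
  have hi : i ≤ m := Nat.mod_lt _ hm
  have ht₀ : t₀ < q := (Nat.div_lt_iff_lt_mul hm).2 (by lia)
  have htail : y ((q * m + 1 + (i - 1) % L : ℕ) : ZMod K) = 0 := by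
    have : (i - 1) % L < L := Nat.mod_lt _ (Nat.pos_of_dvd_of_pos hLm hm)
    exact hknown _ (by lia) (by lia)
  have hblock : ∀ t < q, t ≠ t₀ → y ((i + t * m : ℕ) : ZMod K) = 0 := by
    intro t htq hne
    rcases hne.lt_or_gt with hlt | hgt
    · have := Nat.mul_add_le_mul_of_lt m hlt
      exact apply_eq_zero_of_add_le (by lia) hknown (by lia) (by lia)
    · have := Nat.mul_add_le_mul_of_lt m hgt
      have := Nat.mul_add_le_mul_of_lt m htq
      exact hknown _ (by lia) (by lia)
  rw [hai, ← codeSymbol_eq_of_forall_ne ht₀ hblock htail, hcode i (mem_Icc.2 ⟨by lia, hi⟩)]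

theorem apply_eq_zero_of_mul_lt (hK : K = q * m + L) (hm : 0 < m) (hLm : L ∣ m) {a : ℕ}
    (hknown : ∀ n : ℕ, a < n → n ≤ a + (K - m) → y n = 0)
    (hcode : ∀ i ∈ Icc 1 m, codeSymbol m q L y i = 0) (hqa : q * m < a) (haK : a ≤ K) :
    y a = 0 := by
  have hLle : L ≤ m := Nat.le_of_dvd hm hLm
  have htail : q * m + 1 + (a - q * m - 1) % L = a := by
    rw [Nat.mod_eq_of_lt (by lia)]
    lia
  have hblock : ∀ t < q, y ((a - q * m + t * m : ℕ) : ZMod K) = 0 := fun t htq ↦ by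
    have := Nat.mul_add_le_mul_of_lt m htq
    exact apply_eq_zero_of_add_le haK hknown (by lia) (by lia)
  have h := codeSymbol_eq_tail (L := L) hblock
  rwa [hcode _ (mem_Icc.2 ⟨by lia, by lia⟩), htail, eq_comm] at h

theorem apply_tail_eq_zero_of_lt (hK : K = q * m + L) (hq : 0 < q) (hLm : L ∣ m) {a : ℕ}
    (hknown : ∀ n : ℕ, a < n → n ≤ a + (K - m) → y n = 0)
    (hcode : ∀ i ∈ Icc 1 m, codeSymbol m q L y i = 0) (ha : 1 ≤ a) (ham : a < m) :
    y ((q * m + 1 + (a - 1) % L : ℕ) : ZMod K) = 0 := by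
  have hL : 0 < L := Nat.pos_of_dvd_of_pos hLm (by lia)
  by_cases haL : a + L ≤ m
  · have hblock : ∀ t < q, y ((a + L + t * m : ℕ) : ZMod K) = 0 := fun t htq ↦ by
      have := Nat.mul_add_le_mul_of_lt m htq
      exact hknown _ (by lia) (by lia)
    have h := codeSymbol_eq_tail (L := L) hblock
    rwa [hcode _ (mem_Icc.2 ⟨by lia, haL⟩), show a + L - 1 = a - 1 + L by lia,
      Nat.add_mod_right, eq_comm] at h
  · have := Nat.le_div_mul_add_of_dvd hLm (show m ≤ a - 1 + L by lia)
    have := Nat.div_add_mod' (a - 1) L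
    have := Nat.mul_add_le_mul_of_lt m hq
    exact hknown _ (by lia) (by lia)

theorem apply_eq_zero_of_lt (hK : K = q * m + L) (hq : 0 < q) (hLm : L ∣ m) {a : ℕ}
    (hknown : ∀ n : ℕ, a < n → n ≤ a + (K - m) → y n = 0)
    (hcode : ∀ i ∈ Icc 1 m, codeSymbol m q L y i = 0) (ha : 1 ≤ a) (ham : a < m) :
    y a = 0 := by
  have hblock : ∀ t < q, t ≠ 0 → y ((a + t * m : ℕ) : ZMod K) = 0 := fun t htq ht ↦ by
    have := Nat.mul_add_le_mul_of_lt m (Nat.pos_of_ne_zero ht)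
    have := Nat.mul_add_le_mul_of_lt m htq
    exact hknown _ (by lia) (by lia)
  have h := codeSymbol_eq_of_forall_ne hq hblock
    (apply_tail_eq_zero_of_lt hK hq hLm hknown hcode ha ham)
  rwa [hcode a (mem_Icc.2 ⟨ha, ham.le⟩), zero_mul, add_zero, eq_comm] at h

theorem apply_eq_zero_of_codeSymbol_eq_zero (hK : K = q * m + L) (hm : 0 < m) (hq : 0 < q)
    (hLm : L ∣ m) {k : ZMod K} (hside : ∀ j ∈ Icc 1 (K - m), y (k + j) = 0)
    (hcode : ∀ i ∈ Icc 1 m, codeSymbol m q L y i = 0) : y k = 0 := by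
  have : NeZero K := ⟨by have := Nat.mul_pos hq hm; lia⟩
  obtain ⟨a, ha, rfl⟩ := ZMod.exists_mem_Icc_natCast_eq k
  obtain ⟨ha1, haK⟩ := mem_Icc.1 ha
  have hknown : ∀ n : ℕ, a < n → n ≤ a + (K - m) → y n = 0 := fun n h₁ h₂ ↦ by
    have := hside (n - a) (mem_Icc.2 ⟨by lia, by lia⟩)
    rwa [← Nat.cast_add, Nat.add_sub_cancel' h₁.le] at this
  rcases lt_or_ge a m with ham | hma
  · exact apply_eq_zero_of_lt hK hq hLm hknown hcode ha1 ham
  rcases le_or_gt a (q * m) with haq | hqa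
  · exact apply_eq_zero_of_le_mul hK hm hLm hknown hcode hma haq
  · exact apply_eq_zero_of_mul_lt hK hm hLm hknown hcode hqa haK

end CyclicIndexCode

theorem stmt_10_general (K D L : ℕ) [NeZero K] (hD : 0 < D)
    (hLm : L ∣ (K - D)) (hdvd : (K - D) ∣ (K - L))
    (k : ZMod K) (x x' : ZMod K → ZMod 2)
    (hside : ∀ j ∈ Finset.Icc 1 D, x (k + (j : ℕ)) = x' (k + (j : ℕ)))
    (hcode : ∀ i ∈ Finset.Icc 1 (K - D),
      (∑ t ∈ Finset.range ((K - L) / (K - D)), x ((i + t * (K - D) : ℕ) : ZMod K))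
          + x ((((K - L) / (K - D)) * (K - D) + 1 + (i - 1) % L : ℕ) : ZMod K)
        = (∑ t ∈ Finset.range ((K - L) / (K - D)), x' ((i + t * (K - D) : ℕ) : ZMod K))
          + x' ((((K - L) / (K - D)) * (K - D) + 1 + (i - 1) % L : ℕ) : ZMod K)) :
    x k = x' k := by
  rcases le_or_gt K D with hKD | hDK
  · simpa using hside K (mem_Icc.2 ⟨NeZero.one_le, hKD⟩)
  have hm : 0 < K - D := by lia
  have hLK : L < K := (Nat.le_of_dvd hm hLm).trans_lt (by lia)
  have hK : K = (K - L) / (K - D) * (K - D) + L := by rw [Nat.div_mul_cancel hdvd]; lia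
  have hq : 0 < (K - L) / (K - D) := Nat.pos_of_ne_zero fun h ↦ by
    rw [h, zero_mul, zero_add] at hK
    lia
  rw [← sub_eq_zero, ← Pi.sub_apply]
  refine CyclicIndexCode.apply_eq_zero_of_codeSymbol_eq_zero hK hm hq hLm
    (fun j hj ↦ ?_) (fun i hi ↦ ?_)
  · rw [Pi.sub_apply, sub_eq_zero]
    exact hside j (by rwa [Nat.sub_sub_self hDK.le] at hj)
  · rw [CyclicIndexCode.codeSymbol_sub, sub_eq_zero]
    exact hcode i hi

/-- with `λ ∣ (K-D)`, `(K-D) ∣ (K-λ)`, `m = K-D`, `q = (K-λ)/m`, the code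
`c_i = x_i + x_{i+m} + ⋯ + x_{i+(q-1)m} + x_{qm+1+((i-1) mod λ)}` (`i = 1,…,m`)
lets every receiver `R_k` with antidotes `{x_{k+1},…,x_{k+D}}` decode `x_k`;
so the problem admits a scalar linear code of length `K - D`. -/
theorem stmt_10 (K D L : ℕ) [NeZero K] (hD : 0 < D) (hL : 0 < L)
    (hLm : L ∣ (K - D)) (hdvd : (K - D) ∣ (K - L))
    (k : ZMod K) (x x' : ZMod K → ZMod 2)
    (hside : ∀ j ∈ Finset.Icc 1 D, x (k + (j : ℕ)) = x' (k + (j : ℕ)))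
    (hcode : ∀ i ∈ Finset.Icc 1 (K - D),
      (∑ t ∈ Finset.range ((K - L) / (K - D)), x ((i + t * (K - D) : ℕ) : ZMod K))
          + x ((((K - L) / (K - D)) * (K - D) + 1 + (i - 1) % L : ℕ) : ZMod K)
        = (∑ t ∈ Finset.range ((K - L) / (K - D)), x' ((i + t * (K - D) : ℕ) : ZMod K))
          + x' ((((K - L) / (K - D)) * (K - D) + 1 + (i - 1) % L : ℕ) : ZMod K)) :
    x k = x' k :=
  stmt_10_general K D L hD hLm hdvd k x x' hside hcode
end

section
/- In the substitution construction over F₂ (y_k = Σ_{i=1}^{U+1} x_{k+1-i,i}, indices mod K), for any l with 1 ≤ l ≤ U+1 and any offsets 1 ≤ a_1 < ⋯ < a_d ≤ D - U, the sum S_{k+U+1-l}^{(U+1)} = Σ_{j=0}^{d} Σ_{i=1}^{U+1} x_{k+U+2-l+a_j-i, i} (with a_0 := 0) contains the demanded symbol x_{k,U+2-l} with coefficient 1, and every other summand x_{m,i} with m ≡ k (mod K) has second index i = U+2-l+a_j for some j ≥ 1 with a_j ≤ l - 1 + a_j ≤ U + 1 — i.e., second index strictly greater than U+2-l. Consequently,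 if receiver R_k already knows x_{k,U+3-l},…,x_{k,U+1} and all antidote symbols (messages k-U,…,k-1 and k+1,…,k+D), it can solve for x_{k,U+2-l}. -/
theorem add_natCast_sub_natCast_eq_self_iff {K s i : ℕ} (k : ZMod K) (hs : s ≤ K)
    (hi₀ : 0 < i) (hiK : i < K) : k + (s : ZMod K) - (i : ZMod K) = k ↔ i = s := by
  rw [add_sub_assoc, add_eq_left, sub_eq_zero, ZMod.natCast_eq_natCast_iff',
    Nat.mod_eq_of_lt hiK]
  rcases hs.lt_or_eq with hs | rfl
  · rw [Nat.mod_eq_of_lt hs, eq_comm]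
  · rw [Nat.mod_self]
    omega

theorem isAntidote_add_natCast_sub_natCast {K U D s i : ℕ} (k : ZMod K) (hs : s ≤ i + D)
    (hi : i ≤ s + U) (hne : i ≠ s) : isAntidote K U D k (k + (s : ZMod K) - (i : ZMod K)) := by
  rcases Nat.lt_or_gt_of_ne hne with hlt | hgt
  · refine Or.inr ⟨s - i, Finset.mem_Icc.mpr ⟨by omega, by omega⟩, ?_⟩
    rw [Nat.cast_sub hlt.le]
    ring
  · refine Or.inl ⟨i - s, Finset.mem_Icc.mpr ⟨by omega, by omega⟩, ?_⟩
    rw [Nat.cast_sub hgt.le]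
    ring

theorem Finset.apply_eq_of_sum_eq_of_eq_on_erase {ι M : Type*} [DecidableEq ι]
    [AddCancelCommMonoid M] {s : Finset ι} {f g : ι → M} {a : ι} (ha : a ∈ s)
    (hsum : ∑ i ∈ s, f i = ∑ i ∈ s, g i) (hfg : ∀ i ∈ s, i ≠ a → f i = g i) : f a = g a := by
  rw [← Finset.add_sum_erase s f ha, ← Finset.add_sum_erase s g ha,
    Finset.sum_congr rfl fun i hi => hfg i (Finset.mem_of_mem_erase hi)
      (Finset.ne_of_mem_erase hi)] at hsum
  exact add_right_cancel hsum

theorem stmt_12_general (K D U : ℕ) (hDU : 1 ≤ D - U)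
    (hKbound : U + D ≤ K - 1)
    (l : ℕ) (hl : 1 ≤ l) (hl' : l ≤ U + 1)
    (d : ℕ) (a : Fin d → ℕ)
    (hrange : ∀ j, 1 ≤ a j ∧ a j ≤ D - U) (k : ZMod K) :
    -- the demanded symbol x_{k,U+2-l} appears exactly once in the j = 0 group
    (∀ i ∈ Finset.Icc 1 (U + 1),
      ((k + ((U + 2 - l : ℕ) : ZMod K) - ((i : ℕ) : ZMod K) = k) ↔ i = U + 2 - l))
    -- summands of the j ≥ 1 groups with first index k have second index
    -- i = U+2-l+a_j, strictly greater than U+2-l (and at most U+1)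
    ∧ (∀ j : Fin d, ∀ i ∈ Finset.Icc 1 (U + 1),
        (k + ((U + 2 - l : ℕ) : ZMod K) + ((a j : ℕ) : ZMod K) - ((i : ℕ) : ZMod K) = k) →
          i = U + 2 - l + a j ∧ U + 2 - l < i ∧ i ≤ U + 1)
    -- hence R_k, knowing x_{k,U+3-l},…,x_{k,U+1} and all antidotes, solves for x_{k,U+2-l}
    ∧ (∀ x x' : ZMod K → ℕ → ZMod 2,
        (∀ m : ZMod K, isAntidote K U D k m → ∀ i, x m i = x' m i) →
        (∀ i ∈ Finset.Icc (U + 3 - l) (U + 1), x k i = x' k i) →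
        (∑ i ∈ Finset.Icc 1 (U + 1), x (k + ((U + 2 - l : ℕ) : ZMod K) - ((i : ℕ) : ZMod K)) i
            + ∑ j : Fin d, ∑ i ∈ Finset.Icc 1 (U + 1),
                x (k + ((U + 2 - l : ℕ) : ZMod K) + ((a j : ℕ) : ZMod K) - ((i : ℕ) : ZMod K)) i
          = ∑ i ∈ Finset.Icc 1 (U + 1), x' (k + ((U + 2 - l : ℕ) : ZMod K) - ((i : ℕ) : ZMod K)) i
            + ∑ j : Fin d, ∑ i ∈ Finset.Icc 1 (U + 1),
                x' (k + ((U + 2 - l : ℕ) : ZMod K) + ((a j : ℕ) : ZMod K) - ((i : ℕ) : ZMod K)) i) →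
        x k (U + 2 - l) = x' k (U + 2 - l)) := by
  have hcast (j : Fin d) : k + ((U + 2 - l : ℕ) : ZMod K) + ((a j : ℕ) : ZMod K)
      = k + ((U + 2 - l + a j : ℕ) : ZMod K) := by
    push_cast
    ring
  refine ⟨fun i hi => ?_, fun j i hi h => ?_, fun x x' hanti hknown hsum => ?_⟩
  · rw [Finset.mem_Icc] at hi
    exact add_natCast_sub_natCast_eq_self_iff k (by omega) (by omega) (by omega)
  · rw [Finset.mem_Icc] at hi
    have := hrange j
    rw [hcast, add_natCast_sub_natCast_eq_self_iff k (by omega) (by omega) (by omega)] at h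
    omega
  · have hgroups (j : Fin d) (i : ℕ) (hi : i ∈ Finset.Icc 1 (U + 1)) :
        x (k + ((U + 2 - l : ℕ) : ZMod K) + ((a j : ℕ) : ZMod K) - ((i : ℕ) : ZMod K)) i
          = x' (k + ((U + 2 - l : ℕ) : ZMod K) + ((a j : ℕ) : ZMod K) - ((i : ℕ) : ZMod K)) i := by
      rw [Finset.mem_Icc] at hi
      have := hrange j
      rw [hcast]
      by_cases hs : i = U + 2 - l + a j
      · rw [(add_natCast_sub_natCast_eq_self_iff k (by omega) (by omega) (by omega)).mpr hs]
        exact hknown i (Finset.mem_Icc.mpr ⟨by omega, by omega⟩)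
      · exact hanti _ (isAntidote_add_natCast_sub_natCast k (by omega) (by omega) hs) i
    rw [Finset.sum_congr rfl fun j _ => Finset.sum_congr rfl (hgroups j)] at hsum
    have htarget := Finset.apply_eq_of_sum_eq_of_eq_on_erase
      (f := fun i => x (k + ((U + 2 - l : ℕ) : ZMod K) - ((i : ℕ) : ZMod K)) i)
      (g := fun i => x' (k + ((U + 2 - l : ℕ) : ZMod K) - ((i : ℕ) : ZMod K)) i)
      (Finset.mem_Icc.mpr ⟨by omega, by omega⟩) (add_right_cancel hsum)
      fun i hi hne => hanti _ (isAntidote_add_natCast_sub_natCast k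
        (by rw [Finset.mem_Icc] at hi; omega) (by rw [Finset.mem_Icc] at hi; omega) hne) i
    simpa only [add_sub_cancel_right] using htarget

/-- inductive decoding step: in the sum
`S_{k+U+1-l}^{(U+1)} = Σ_{j=0}^{d} Σ_{i=1}^{U+1} x_{k+U+2-l+a_j-i,i}` (`a_0 = 0`),
the demanded symbol `x_{k,U+2-l}` appears with coefficient 1 (the only summand of the
`j = 0` group with first index `k` is `i = U+2-l`); every other summand with first index
`k` comes from some `j ≥ 1` and has second index `i = U+2-l+a_j > U+2-l` (and `≤ U+1`);
consequently, knowing `x_{k,U+3-l},…,x_{k,U+1}` and all antidote symbols, receiver `R_k`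
solves for `x_{k,U+2-l}`. -/
theorem stmt_12 (K D U : ℕ) [NeZero K] (hU : U ≤ D) (hDU : 1 ≤ D - U)
    (hKbound : U + D ≤ K - 1) (hK : 1 ≤ K)
    (l : ℕ) (hl : 1 ≤ l) (hl' : l ≤ U + 1)
    (d : ℕ) (a : Fin d → ℕ) (ha : StrictMono a)
    (hrange : ∀ j, 1 ≤ a j ∧ a j ≤ D - U) (k : ZMod K) :
    -- the demanded symbol x_{k,U+2-l} appears exactly once in the j = 0 group
    (∀ i ∈ Finset.Icc 1 (U + 1),
      ((k + ((U + 2 - l : ℕ) : ZMod K) - ((i : ℕ) : ZMod K) = k) ↔ i = U + 2 - l))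
    -- summands of the j ≥ 1 groups with first index k have second index
    -- i = U+2-l+a_j, strictly greater than U+2-l (and at most U+1)
    ∧ (∀ j : Fin d, ∀ i ∈ Finset.Icc 1 (U + 1),
        (k + ((U + 2 - l : ℕ) : ZMod K) + ((a j : ℕ) : ZMod K) - ((i : ℕ) : ZMod K) = k) →
          i = U + 2 - l + a j ∧ U + 2 - l < i ∧ i ≤ U + 1)
    -- hence R_k, knowing x_{k,U+3-l},…,x_{k,U+1} and all antidotes, solves for x_{k,U+2-l}
    ∧ (∀ x x' : ZMod K → ℕ → ZMod 2,
        (∀ m : ZMod K, isAntidote K U D k m → ∀ i, x m i = x' m i) →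
        (∀ i ∈ Finset.Icc (U + 3 - l) (U + 1), x k i = x' k i) →
        (∑ i ∈ Finset.Icc 1 (U + 1), x (k + ((U + 2 - l : ℕ) : ZMod K) - ((i : ℕ) : ZMod K)) i
            + ∑ j : Fin d, ∑ i ∈ Finset.Icc 1 (U + 1),
                x (k + ((U + 2 - l : ℕ) : ZMod K) + ((a j : ℕ) : ZMod K) - ((i : ℕ) : ZMod K)) i
          = ∑ i ∈ Finset.Icc 1 (U + 1), x' (k + ((U + 2 - l : ℕ) : ZMod K) - ((i : ℕ) : ZMod K)) i
            + ∑ j : Fin d, ∑ i ∈ Finset.Icc 1 (U + 1),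
                x' (k + ((U + 2 - l : ℕ) : ZMod K) + ((a j : ℕ) : ZMod K) - ((i : ℕ) : ZMod K)) i) →
        x k (U + 2 - l) = x' k (U + 2 - l)) :=
  stmt_12_general K D U hDU hKbound l hl hl' d a hrange k
end
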